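/- Let K be an algebraically closed field of characteristic zero and let f, f̄ ∈ K(x) be such that f - f̄ is rationally summable. Then for every k ∈ ℕ and every ℤ-orbit ω ⊆ K, dres(f, ω, k) = dres(f̄, ω, k). -/

import Mathlib

/-! For `k ≥ 1`, the coefficient `c_k(α)` of the complete partial fraction decomposition of `f` is
the coefficient of `(x - α)^(-k)` in the Laurent expansion of `f` at `α`, which is additive in `f`
and vanishes unless `α` is a pole of `f`; hence `dres(·, ω, k)` is additive. The Laurent expansion
of `g(x + 1)` at `α` is that of `g` at `α + 1`, so the discrete residue of `g(x + 1) - g(x)` along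
`α + ℤ` is a telescoping sum with finitely many nonzero terms, i.e. zero. -/

open Polynomial

/-- The shift `f(x) ↦ f(x+1)` on rational functions. -/
noncomputable def shift {K : Type*} [Field K] (f : RatFunc K) : RatFunc K :=
  RatFunc.mk (f.num.comp (Polynomial.X + 1)) (f.denom.comp (Polynomial.X + 1))

open scoped LaurentSeries PowerSeries

theorem finite_support_comp_add_intCast {K M : Type*} [AddGroupWithOne K] [CharZero K] [Zero M]
    {w : K → M} (hw : (Function.support w).Finite) (α : K) :
    (Function.support fun n : ℤ => w (α + n)).Finite :=
  hw.preimage ((add_right_injective α).comp Int.cast_injective).injOn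

theorem finsum_int_add_one_sub_eq_zero {M : Type*} [AddCommGroup M] {u : ℤ → M}
    (hu : (Function.support u).Finite) : ∑ᶠ n : ℤ, (u (n + 1) - u n) = 0 := by
  have hu' : (Function.support fun n : ℤ => u (n + 1)).Finite :=
    hu.preimage (add_left_injective 1).injOn
  rw [finsum_sub_distrib hu' hu, sub_eq_zero]
  exact finsum_comp_equiv (Equiv.addRight 1)

namespace RatFunc

variable {K : Type*} [Field K]

theorem coeff_coe_div_eq_zero_of_neg {A B : K[X]} (hB : B.eval 0 ≠ 0) {m : ℤ} (hm : m < 0) :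
    ((algebraMap K[X] (RatFunc K) A / algebraMap K[X] (RatFunc K) B : RatFunc K) : K⸨X⸩).coeff m
      = 0 := by
  have hB' : PowerSeries.constantCoeff (B : K⟦X⟧) ≠ 0 := by
    rwa [Polynomial.constantCoeff_coe, Polynomial.coeff_zero_eq_eval_zero]
  have hquot : ((algebraMap K[X] (RatFunc K) A / algebraMap K[X] (RatFunc K) B : RatFunc K) : K⸨X⸩)
      = (((A : K⟦X⟧) * (B : K⟦X⟧)⁻¹ : K⟦X⟧) : K⸨X⸩) := by
    have hBne : ((B : K⟦X⟧) : K⸨X⸩) ≠ 0 := by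
      rw [ne_eq, map_eq_zero_iff _ HahnSeries.ofPowerSeries_injective, Polynomial.coe_eq_zero_iff]
      exact fun h => hB (by simp [h])
    rw [algebraMap_apply_div, algebraMap_hahnSeries_apply, algebraMap_hahnSeries_apply,
      div_eq_iff hBne, ← PowerSeries.coe_mul, mul_assoc, PowerSeries.inv_mul_cancel _ hB', mul_one]
  rw [hquot, PowerSeries.coeff_coe, if_pos hm]

noncomputable def laurentCoeff (α : K) (m : ℤ) : RatFunc K →+ K :=
  (HahnSeries.coeff.addMonoidHom m).comp
    ((algebraMap (RatFunc K) K⸨X⸩).toAddMonoidHom.comp (laurent α).toAddMonoidHom)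

theorem laurentCoeff_apply (α : K) (m : ℤ) (f : RatFunc K) :
    laurentCoeff α m f = ((laurent α f : RatFunc K) : K⸨X⸩).coeff m :=
  rfl

theorem laurentCoeff_div_eq_zero {α : K} {A B : K[X]} (hB : B.eval α ≠ 0) {m : ℤ} (hm : m < 0) :
    laurentCoeff α m (algebraMap K[X] (RatFunc K) A / algebraMap K[X] (RatFunc K) B) = 0 := by
  rw [laurentCoeff_apply, laurent_div]
  exact coeff_coe_div_eq_zero_of_neg (by rwa [taylor_eval, zero_add]) hm

theorem finite_support_laurentCoeff {m : ℤ} (hm : m < 0) (f : RatFunc K) :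
    (Function.support fun α => laurentCoeff α m f).Finite := by
  refine (finite_setOfPred_isRoot f.denom_ne_zero).subset fun α hα => ?_
  by_contra hroot
  rw [← f.num_div_denom] at hα
  exact hα (laurentCoeff_div_eq_zero hroot hm)

theorem laurentCoeff_algebraMap {m : ℤ} (hm : m < 0) (α : K) (p : K[X]) :
    laurentCoeff α m (algebraMap K[X] (RatFunc K) p) = 0 := by
  simpa using laurentCoeff_div_eq_zero (A := p) (B := 1) (α := α) (by simp) hm

theorem laurentCoeff_C_div_X_sub_C_pow_self (α e : K) (m : ℤ) (j : ℕ) :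
    laurentCoeff α m (C e / (X - C α) ^ j) = if m = -j then e else 0 := by
  have hC : ((C e : RatFunc K) : K⸨X⸩) = HahnSeries.C e := by
    simp [← algebraMap_C, ← IsScalarTower.algebraMap_apply]
  rw [laurentCoeff_apply, map_div₀, map_pow, map_sub, laurent_X, laurent_C, laurent_C,
    add_sub_cancel_right, map_div₀, map_pow, coe_X, hC, ← single_one_eq_pow, div_eq_mul_inv,
    HahnSeries.inv_single, inv_one, HahnSeries.C_apply, HahnSeries.single_mul_single, zero_add,
    mul_one, HahnSeries.coeff_single]
  congr

theorem laurentCoeff_C_div_X_sub_C_pow_of_ne {k : ℕ} (hk : 0 < k) {α β : K} {j : ℕ}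
    (hne : (j, β) ≠ (k, α)) (e : K) : laurentCoeff α (-k) (C e / (X - C β) ^ j) = 0 := by
  by_cases hβ : β = α
  · subst hβ
    have hjk : j ≠ k := fun h => hne (by rw [h])
    simp [laurentCoeff_C_div_X_sub_C_pow_self, hjk.symm]
  · have hB : ((Polynomial.X - Polynomial.C β) ^ j).eval α ≠ 0 := by
      rw [eval_pow, eval_sub, Polynomial.eval_X, Polynomial.eval_C]
      exact pow_ne_zero _ (sub_ne_zero.mpr (Ne.symm hβ))
    simpa using laurentCoeff_div_eq_zero (A := Polynomial.C e) hB (by omega)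

theorem laurentCoeff_algebraMap_add_finsum {k : ℕ} (hk : 0 < k) (α : K) (p : K[X])
    (d : ℕ → K → K) (hd : {q : ℕ × K | d q.1 q.2 ≠ 0}.Finite) :
    laurentCoeff α (-k) (algebraMap K[X] (RatFunc K) p +
      ∑ᶠ (j : ℕ) (β : K), C (d j β) / (X - C β) ^ j) = d k α := by
  have hT : (Function.support fun q : ℕ × K =>
      (C (d q.1 q.2) / (X - C q.2) ^ q.1 : RatFunc K)).Finite :=
    hd.subset fun q hq h => hq (by simp [h])
  rw [← finsum_curry _ hT, map_add, laurentCoeff_algebraMap (by omega), zero_add,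
    map_finsum _ hT,
    finsum_eq_single _ (k, α) fun q hq => laurentCoeff_C_div_X_sub_C_pow_of_ne hk hq _]
  simp [laurentCoeff_C_div_X_sub_C_pow_self]

theorem shift_eq_laurent_one (g : RatFunc K) : shift g = laurent 1 g := by
  conv_rhs => rw [← g.num_div_denom, laurent_div]
  rw [shift, mk_eq_div]
  congr 2

theorem laurentCoeff_shift (α : K) (m : ℤ) (g : RatFunc K) :
    laurentCoeff α m (shift g) = laurentCoeff (α + 1) m g := by
  rw [laurentCoeff_apply, laurentCoeff_apply, shift_eq_laurent_one, laurent_laurent, add_comm]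

/-- `dres(f, α + ℤ, k)`. -/
noncomputable def discreteResidue (f : RatFunc K) (α : K) (k : ℕ) : K :=
  ∑ᶠ n : ℤ, laurentCoeff (α + n) (-k) f

theorem discreteResidue_algebraMap_add_finsum {k : ℕ} (hk : 0 < k) (α : K) (p : K[X])
    (d : ℕ → K → K) (hd : {q : ℕ × K | d q.1 q.2 ≠ 0}.Finite) :
    discreteResidue (algebraMap K[X] (RatFunc K) p +
      ∑ᶠ (j : ℕ) (β : K), C (d j β) / (X - C β) ^ j) α k = ∑ᶠ n : ℤ, d k (α + n) := by
  simp only [discreteResidue, laurentCoeff_algebraMap_add_finsum hk _ p d hd]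

section CharZero

variable [CharZero K]

theorem finite_support_laurentCoeff_add_intCast {m : ℤ} (hm : m < 0) (f : RatFunc K) (α : K) :
    (Function.support fun n : ℤ => laurentCoeff (α + n) m f).Finite :=
  finite_support_comp_add_intCast (finite_support_laurentCoeff hm f) α

theorem discreteResidue_sub {k : ℕ} (hk : 0 < k) (f g : RatFunc K) (α : K) :
    discreteResidue (f - g) α k = discreteResidue f α k - discreteResidue g α k := by
  have hm : -(k : ℤ) < 0 := by omega
  simp only [discreteResidue, map_sub]
  exact finsum_sub_distrib (finite_support_laurentCoeff_add_intCast hm f α)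
    (finite_support_laurentCoeff_add_intCast hm g α)

theorem discreteResidue_shift_sub_self {k : ℕ} (hk : 0 < k) (g : RatFunc K) (α : K) :
    discreteResidue (shift g - g) α k = 0 := by
  have hα : ∀ n : ℤ, α + n + 1 = α + (n + 1 : ℤ) := fun n => by push_cast; ring
  simp only [discreteResidue, map_sub, laurentCoeff_shift, hα]
  exact finsum_int_add_one_sub_eq_zero
    (finite_support_laurentCoeff_add_intCast (by omega) g α)

end CharZero

end RatFunc

theorem discrete_residues_invariant_general {K : Type*} [Field K] [CharZero K]
    (f fbar : RatFunc K) (p pbar : Polynomial K) (c cbar : ℕ → K → K)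
    (hfin : {q : ℕ × K | c q.1 q.2 ≠ 0}.Finite)
    (hfinbar : {q : ℕ × K | cbar q.1 q.2 ≠ 0}.Finite)
    (hf : f = algebraMap (Polynomial K) (RatFunc K) p +
      ∑ᶠ (k : ℕ) (α : K), RatFunc.C (c k α) / (RatFunc.X - RatFunc.C α) ^ k)
    (hfbar : fbar = algebraMap (Polynomial K) (RatFunc K) pbar +
      ∑ᶠ (k : ℕ) (α : K), RatFunc.C (cbar k α) / (RatFunc.X - RatFunc.C α) ^ k)
    (hsum : ∃ g : RatFunc K, f - fbar = shift g - g) :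
    ∀ k : ℕ, 1 ≤ k → ∀ α : K,
      (∑ᶠ n : ℤ, c k (α + (n : K))) = ∑ᶠ n : ℤ, cbar k (α + (n : K)) := by
  intro k hk α
  obtain ⟨g, hg⟩ := hsum
  rw [← RatFunc.discreteResidue_algebraMap_add_finsum hk α p c hfin, ← hf,
    ← RatFunc.discreteResidue_algebraMap_add_finsum hk α pbar cbar hfinbar, ← hfbar,
    ← sub_eq_zero, ← RatFunc.discreteResidue_sub hk, hg, RatFunc.discreteResidue_shift_sub_self hk]

/-- Discrete residues are invariant under addition of rationally summable
functions: if `f - f̄` is summable, then `dres(f,ω,k) = dres(f̄,ω,k)` for every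
`ℤ`-orbit `ω` and every order `k ≥ 1`. -/
theorem discrete_residues_invariant {K : Type*} [Field K] [CharZero K] [IsAlgClosed K]
    (f fbar : RatFunc K) (p pbar : Polynomial K) (c cbar : ℕ → K → K)
    (hfin : {q : ℕ × K | c q.1 q.2 ≠ 0}.Finite)
    (hfinbar : {q : ℕ × K | cbar q.1 q.2 ≠ 0}.Finite)
    (hord : ∀ k α, c k α ≠ 0 → 1 ≤ k)
    (hordbar : ∀ k α, cbar k α ≠ 0 → 1 ≤ k)
    (hf : f = algebraMap (Polynomial K) (RatFunc K) p +
      ∑ᶠ (k : ℕ) (α : K), RatFunc.C (c k α) / (RatFunc.X - RatFunc.C α) ^ k)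
    (hfbar : fbar = algebraMap (Polynomial K) (RatFunc K) pbar +
      ∑ᶠ (k : ℕ) (α : K), RatFunc.C (cbar k α) / (RatFunc.X - RatFunc.C α) ^ k)
    (hsum : ∃ g : RatFunc K, f - fbar = shift g - g) :
    ∀ k : ℕ, 1 ≤ k → ∀ α : K,
      (∑ᶠ n : ℤ, c k (α + (n : K))) = ∑ᶠ n : ℤ, cbar k (α + (n : K)) :=
  discrete_residues_invariant_general f fbar p pbar c cbar hfin hfinbar hf hfbar hsum
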